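/- Let f : 𝔻 → 𝔻 be holomorphic, let τ ∈ ∂𝔻, and let ζ_1, …, ζ_n be distinct points of ∂𝔻 such that for each j = 1, …, n the radial limit f*(ζ_j) = lim_{r→1} f(rζ_j) exists and equals τ and the angular derivative f'(ζ_j) := ∠lim_{z→ζ_j}(f(z)−τ)/(z−ζ_j) exists finitely. Then Σ_{j=1}^n (1/|f'(ζ_j)|) δ_{ζ_j} ≤ μ^s_{f,τ} (as positive Borel measures on ∂𝔻), where μ^s_{f,τ} is the singular part of the Aleksandrov–Clark measure of f at τ. -/

import Mathlib

open Complex MeasureTheory Filter Topology Set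
open scoped ENNReal NNReal

noncomputable section

/-- The open unit disc `𝔻 = {z ∈ ℂ : |z| < 1}`. -/
def unitDisc : Set ℂ := {z : ℂ | ‖z‖ < 1}

/-- The Poisson kernel `P(ζ, z) = (1 - |z|²)/|z - ζ|²`. -/
def discPoissonKernel (ζ z : ℂ) : ℝ := (1 - ‖z‖ ^ 2) / ‖z - ζ‖ ^ 2

/-- `f` is a holomorphic self-map of the unit disc. -/
def IsHolSelfMap (f : ℂ → ℂ) : Prop :=
  DifferentiableOn ℂ f unitDisc ∧ MapsTo f unitDisc unitDisc

/-- `μ` is the Aleksandrov–Clark measure of `f` at `τ`: a finite positive Borel measure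
concentrated on the unit circle such that
`Re((τ + f z)/(τ - f z)) = ∫ P(ζ, z) dμ(ζ)` for all `z ∈ 𝔻`. -/
def IsClarkMeasure (f : ℂ → ℂ) (τ : ℂ) (μ : Measure ℂ) : Prop :=
  IsFiniteMeasure μ ∧ μ {z : ℂ | ‖z‖ ≠ 1} = 0 ∧
    ∀ z ∈ unitDisc, ((τ + f z) / (τ - f z)).re = ∫ ζ, discPoissonKernel ζ z ∂μ

/-- A continuous semigroup `(φ_t)_{t ≥ 0}` of holomorphic self-maps of the unit disc. -/
def IsCtsSemigroup (φ : ℝ → ℂ → ℂ) : Prop :=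
  (∀ t : ℝ, 0 ≤ t → IsHolSelfMap (φ t)) ∧
  (∀ z ∈ unitDisc, φ 0 z = z) ∧
  (∀ s t : ℝ, 0 ≤ s → 0 ≤ t → ∀ z ∈ unitDisc, φ (s + t) z = φ s (φ t z)) ∧
  ContinuousOn (fun p : ℝ × ℂ => φ p.1 p.2) (Ici (0 : ℝ) ×ˢ unitDisc)

/-- `G` is the infinitesimal generator of the semigroup `(φ_t)`:
`∂φ_t(z)/∂t = G(φ_t(z))` for all `z ∈ 𝔻`, `t ≥ 0`. -/
def IsInfGenerator (φ : ℝ → ℂ → ℂ) (G : ℂ → ℂ) : Prop :=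
  DifferentiableOn ℂ G unitDisc ∧
  ∀ z ∈ unitDisc, ∀ t : ℝ, 0 ≤ t → HasDerivAt (fun s : ℝ => φ s z) (G (φ t z)) t

/-- Stolz angle at `ζ` with opening `M`. -/
def stolzAngle (ζ : ℂ) (M : ℝ) : Set ℂ :=
  {z : ℂ | ‖z‖ < 1 ∧ ‖ζ - z‖ ≤ M * (1 - ‖z‖)}

/-- Nontangential (angular) limit: `g(z) → L` as `z → ζ` within every Stolz angle. -/
def NTLimit (g : ℂ → ℂ) (ζ L : ℂ) : Prop :=
  ∀ M : ℝ, 1 ≤ M → Tendsto g (𝓝[stolzAngle ζ M] ζ) (𝓝 L)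

/-- Radial limit `f*(ζ) = lim_{r → 1⁻} f(rζ) = L`. -/
def RadialLimit (f : ℂ → ℂ) (ζ L : ℂ) : Prop :=
  Tendsto (fun r : ℝ => f ((r : ℂ) * ζ)) (𝓝[<] (1 : ℝ)) (𝓝 L)

/-- `τ` is a boundary regular fixed point of `f` with (finite) angular derivative `d`. -/
def IsBRFP (f : ℂ → ℂ) (τ d : ℂ) : Prop :=
  RadialLimit f τ τ ∧ NTLimit (fun z => (f z - τ) / (z - τ)) τ d

/-- `τ` is a boundary regular fixed point of the semigroup `(φ_t)` with boundary dilatation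
coefficients `(e^{λ t})`. -/
def HasBRFPWithCoeffs (φ : ℝ → ℂ → ℂ) (τ : ℂ) (lam : ℝ) : Prop :=
  ∀ t : ℝ, 0 ≤ t → IsBRFP (φ t) τ (Real.exp (lam * t))

/-- Normalized arclength (Lebesgue) measure `m` on the unit circle, viewed as a measure on `ℂ`,
with `m(∂𝔻) = 1`. -/
def circleLebesgue : Measure ℂ :=
  ENNReal.ofReal (2 * Real.pi)⁻¹ •
    Measure.map (fun θ : ℝ => Complex.exp (θ * Complex.I))
      (volume.restrict (Ioc (0 : ℝ) (2 * Real.pi)))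

end



/-! ### Auxiliary lemmas -/

section Aux

open Metric

lemma circleLebesgue_singleton (x : ℂ) : circleLebesgue {x} = 0 := by
  have hm : Measurable (fun θ : ℝ => Complex.exp (θ * Complex.I)) := by
    fun_prop
  have hS : Set.Countable {θ : ℝ | Complex.exp (θ * Complex.I) = x} := by
    rcases Set.eq_empty_or_nonempty {θ : ℝ | Complex.exp (θ * Complex.I) = x} with h | ⟨θ₀, hθ₀⟩
    · rw [h]; exact Set.countable_empty
    · refine Set.Countable.mono ?_ (Set.countable_range (fun k : ℤ => θ₀ + k * (2 * Real.pi)))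
      intro θ hθ
      simp only [Set.mem_setOf_eq] at hθ hθ₀
      obtain ⟨k, hk⟩ := Complex.exp_eq_exp_iff_exists_int.1 (hθ.trans hθ₀.symm)
      refine ⟨k, ?_⟩
      have := congrArg Complex.im hk
      simpa using this.symm
  have hpre : volume ((fun θ : ℝ => Complex.exp (θ * Complex.I)) ⁻¹' {x}) = 0 :=
    Set.Countable.measure_zero hS _
  have : circleLebesgue {x}
      = ENNReal.ofReal (2 * Real.pi)⁻¹ *
        (volume.restrict (Ioc (0:ℝ) (2*Real.pi)) ((fun θ : ℝ => Complex.exp (θ * Complex.I)) ⁻¹' {x})) := by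
    simp [circleLebesgue, Measure.map_apply hm (measurableSet_singleton x)]
  rw [this, Measure.restrict_apply (hm (measurableSet_singleton x))]
  rw [measure_mono_null Set.inter_subset_left hpre]
  simp

instance : IsFiniteMeasure circleLebesgue := by
  constructor
  rw [circleLebesgue]
  have hm : Measurable (fun θ : ℝ => Complex.exp (θ * Complex.I)) := by fun_prop
  rw [Measure.smul_apply, Measure.map_apply hm MeasurableSet.univ]
  simp only [Set.preimage_univ, Measure.restrict_apply MeasurableSet.univ, Set.univ_inter]
  simp [Real.volume_Ioc]
  exact ENNReal.mul_lt_top (by simp) (by finiteness)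

lemma herglotz_re {w z : ℂ} (hw : ‖w‖ = 1) :
    ((w + z) / (w - z)).re = discPoissonKernel w z := by
  have hns : Complex.normSq w = 1 := by
    rw [← Complex.sq_norm, hw]; norm_num
  rw [Complex.div_re, ← add_div, discPoissonKernel]
  rw [show ‖z - w‖ = ‖w - z‖ from norm_sub_rev z w]
  rw [Complex.sq_norm, Complex.sq_norm]
  congr 1
  simp only [Complex.add_re, Complex.add_im, Complex.sub_re, Complex.sub_im,
    Complex.normSq_apply] at *
  nlinarith [hns]

lemma herglotz_norm_le {w z : ℂ} (hw : ‖w‖ = 1) (hz : ‖z‖ < 1) :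
    ‖(w + z) / (w - z)‖ ≤ 2 / (1 - ‖z‖) := by
  have h1 : 1 - ‖z‖ ≤ ‖w - z‖ := by
    have := norm_sub_norm_le w z
    simp only [hw] at this
    linarith
  have h2 : ‖w + z‖ ≤ 2 := by
    have := norm_add_le w z
    simp only [hw] at this
    linarith
  have hpos : 0 < 1 - ‖z‖ := by linarith
  rw [norm_div]
  exact div_le_div₀ (by norm_num) h2 hpos h1

lemma unitDisc_eq_ball : unitDisc = Metric.ball (0:ℂ) 1 := by
  ext z; simp [unitDisc, Metric.mem_ball, Complex.dist_eq]

lemma isOpen_unitDisc : IsOpen unitDisc := by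
  rw [unitDisc_eq_ball]; exact Metric.isOpen_ball

lemma herglotz_meas (z : ℂ) : Measurable (fun w : ℂ => (w + z) / (w - z)) := by
  fun_prop

variable {μ : Measure ℂ} [IsFiniteMeasure μ] (hcirc : ∀ᵐ w ∂μ, ‖w‖ = 1)

include hcirc in
lemma herglotz_integrable {z : ℂ} (hz : ‖z‖ < 1) :
    Integrable (fun w : ℂ => (w + z) / (w - z)) μ := by
  refine ⟨(herglotz_meas z).aestronglyMeasurable, ?_⟩
  apply MeasureTheory.HasFiniteIntegral.of_bounded (C := 2 / (1 - ‖z‖))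
  filter_upwards [hcirc] with w hw
  simpa using herglotz_norm_le hw hz

include hcirc in
lemma H_hasDerivAt {z₀ : ℂ} (hz₀ : ‖z₀‖ < 1) :
    HasDerivAt (fun z => ∫ w, (w + z) / (w - z) ∂μ)
      (∫ w, 2 * w / (w - z₀) ^ 2 ∂μ) z₀ := by
  set ε := (1 - ‖z₀‖) / 2 with hε
  have hεpos : 0 < ε := by rw [hε]; linarith
  have key : ∀ᵐ w ∂μ, ∀ z ∈ ball z₀ ε, ‖w - z‖ ≥ ε := by
    filter_upwards [hcirc] with w hw z hz
    rw [mem_ball, Complex.dist_eq] at hz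
    have h1 : ‖z‖ ≤ ‖z₀‖ + ε := by
      have := norm_sub_norm_le z z₀
      linarith
    have h2 : 1 - ‖z‖ ≤ ‖w - z‖ := by
      have := norm_sub_norm_le w z
      simp only [hw] at this; linarith
    have : 1 - (‖z₀‖ + ε) = ε := by rw [hε]; ring
    linarith
  have hderiv : ∀ w z : ℂ, w ≠ z →
      HasDerivAt (fun z => (w + z) / (w - z)) (2 * w / (w - z) ^ 2) z := by
    intro w z hwz
    have h1 : HasDerivAt (fun z : ℂ => w + z) 1 z := by
      simpa using (hasDerivAt_id z).const_add w
    have h2 : HasDerivAt (fun z : ℂ => w - z) (-1) z := by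
      simpa using (hasDerivAt_id z).const_sub w
    have := h1.div h2 (sub_ne_zero.2 hwz)
    exact this.congr_deriv (by ring)
  refine (hasDerivAt_integral_of_dominated_loc_of_deriv_le (ball_mem_nhds z₀ hεpos)
    (F := fun z w => (w + z) / (w - z)) (F' := fun z w => 2 * w / (w - z) ^ 2)
    (bound := fun _ => 2 / ε ^ 2) ?_ ?_ ?_ ?_ ?_ ?_).2
  · exact Filter.Eventually.of_forall fun z => (herglotz_meas z).aestronglyMeasurable
  · exact herglotz_integrable hcirc hz₀
  · exact (by fun_prop : Measurable fun w : ℂ => 2 * w / (w - z₀) ^ 2).aestronglyMeasurable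
  · filter_upwards [key, hcirc] with w hw hw1 z hz
    have hwz := hw z hz
    rw [norm_div, norm_mul, norm_pow]
    have : ‖w - z‖ ^ 2 ≥ ε ^ 2 := by nlinarith [hεpos.le]
    calc ‖(2:ℂ)‖ * ‖w‖ / ‖w - z‖ ^ 2
        ≤ 2 * 1 / ε ^ 2 := by
          apply div_le_div₀ (by norm_num) (by simp [hw1, Complex.norm_two]) (by positivity) this
    _ = 2 / ε ^ 2 := by ring
  · exact integrable_const _
  · filter_upwards [key] with w hw z hz
    have : w ≠ z := by
      intro h; have := hw z hz; rw [h] at this; simp at this; linarith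
    exact hderiv w z this

lemma deriv_zero_of_re_zero {g : ℂ → ℂ} (hg : DifferentiableOn ℂ g unitDisc)
    (hre : ∀ z ∈ unitDisc, (g z).re = 0) {z₀ : ℂ} (hz₀ : z₀ ∈ unitDisc) :
    HasDerivAt g 0 z₀ := by
  have hdiff := (hg.differentiableAt (isOpen_unitDisc.mem_nhds hz₀))
  have hd := hdiff.hasDerivAt
  set g' := deriv g z₀ with hg'
  have main : ∀ v : ℂ, (v * g').re = 0 := by
    intro v
    have hline : HasDerivAt (fun t : ℝ => z₀ + (t : ℂ) * v) v 0 := by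
      simpa using ((Complex.ofRealCLM.hasDerivAt (x := (0:ℝ))).mul_const v).const_add z₀
    have hcomp : HasDerivAt (fun t : ℝ => g (z₀ + (t : ℂ) * v)) (v • g') 0 := by
      have := HasDerivAt.scomp (0 : ℝ) (by simpa using hd) hline
      exact this
    have hrecomp : HasDerivAt (fun t : ℝ => (g (z₀ + (t : ℂ) * v)).re) ((v * g').re) 0 := by
      have h := HasFDerivAt.comp_hasDerivAt (0:ℝ) Complex.reCLM.hasFDerivAt hcomp
      exact h
    have hev : (fun t : ℝ => (g (z₀ + (t : ℂ) * v)).re) =ᶠ[𝓝 (0:ℝ)] (fun _ => (0:ℝ)) := by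
      have hcont : Continuous (fun t : ℝ => z₀ + (t : ℂ) * v) := by fun_prop
      have : ∀ᶠ t : ℝ in 𝓝 0, z₀ + (t : ℂ) * v ∈ unitDisc := by
        have := hcont.tendsto 0
        simp only [Complex.ofReal_zero, zero_mul, add_zero] at this
        exact this (isOpen_unitDisc.mem_nhds hz₀)
      filter_upwards [this] with t ht
      exact hre _ ht
    have : HasDerivAt (fun _ : ℝ => (0:ℝ)) ((v * g').re) 0 :=
      hrecomp.congr_of_eventuallyEq hev.symm
    exact (this.unique (hasDerivAt_const 0 0)).symm ▸ rfl
  have h1 : g'.re = 0 := by simpa using main 1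
  have h2 : g'.im = 0 := by
    have := main Complex.I
    simp only [Complex.mul_re, Complex.I_re, Complex.I_im] at this
    linarith
  have : g' = 0 := Complex.ext h1 h2
  rw [← this]; exact hd

lemma eq_const_of_re_zero {g : ℂ → ℂ} (hg : DifferentiableOn ℂ g unitDisc)
    (hre : ∀ z ∈ unitDisc, (g z).re = 0) {z : ℂ} (hz : z ∈ unitDisc) : g z = g 0 := by
  have h0 : (0:ℂ) ∈ unitDisc := by simp [unitDisc]
  have hconv : Convex ℝ unitDisc := by rw [unitDisc_eq_ball]; exact convex_ball 0 1
  refine hconv.is_const_of_fderivWithin_eq_zero hg (fun x hx => ?_) hz h0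
  rw [fderivWithin_of_isOpen isOpen_unitDisc hx]
  have := (deriv_zero_of_re_zero hg hre hx).hasFDerivAt.fderiv
  rw [this]
  exact ContinuousLinearMap.ext fun w => by simp

include hcirc in
lemma dct_lemma {ζ₀ : ℂ} (hζ₀ : ‖ζ₀‖ = 1) :
    Tendsto (fun r : ℝ => ∫ w, ((1 - r : ℝ) : ℂ) * ((w + r * ζ₀) / (w - r * ζ₀)) ∂μ)
      (𝓝[<] (1:ℝ)) (𝓝 (((2 * (μ {ζ₀}).toReal : ℝ) : ℂ))) := by
  have hζne : ζ₀ ≠ 0 := by intro h; rw [h] at hζ₀; simp at hζ₀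
  have hIoo : Ioo (0:ℝ) 1 ∈ 𝓝[<] (1:ℝ) := Ioo_mem_nhdsLT (by norm_num)
  have key := MeasureTheory.tendsto_integral_filter_of_dominated_convergence
    (μ := μ) (l := 𝓝[<] (1:ℝ))
    (F := fun r w => ((1 - r : ℝ) : ℂ) * ((w + r * ζ₀) / (w - r * ζ₀)))
    (f := Set.indicator {ζ₀} (fun _ => (2:ℂ))) (bound := fun _ => 2)
    (Filter.Eventually.of_forall fun r => by
      apply Measurable.aestronglyMeasurable; fun_prop)
    ?_ (integrable_const 2) ?_
  · convert key using 2
    rw [MeasureTheory.integral_indicator_const _ (measurableSet_singleton ζ₀)]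
    rw [Complex.real_smul]
    push_cast
    ring
    rfl
  · filter_upwards [hIoo] with r hr
    filter_upwards [hcirc] with w hw
    obtain ⟨hr0, hr1⟩ := hr
    have habsr : ‖(r:ℂ) * ζ₀‖ = r := by
      rw [norm_mul, hζ₀, mul_one, Complex.norm_real, Real.norm_eq_abs, abs_of_pos hr0]
    have hlow : 1 - r ≤ ‖w - r * ζ₀‖ := by
      have := norm_sub_norm_le w ((r:ℂ) * ζ₀)
      simp only [hw, habsr] at this
      linarith
    have hup : ‖w + r * ζ₀‖ ≤ 2 := by
      have := norm_add_le w ((r:ℂ) * ζ₀)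
      simp only [hw, habsr] at this
      linarith
    rw [norm_mul, norm_div, Complex.norm_real, Real.norm_eq_abs, abs_of_pos (by linarith)]
    calc (1 - r) * (‖w + r*ζ₀‖ / ‖w - r*ζ₀‖)
        ≤ (1 - r) * (2 / (1 - r)) := by
          apply mul_le_mul_of_nonneg_left _ (by linarith)
          exact div_le_div₀ (by norm_num) hup (by linarith) hlow
      _ = 2 := by
          rw [mul_div_assoc']
          exact mul_div_cancel_left₀ 2 (ne_of_gt (by linarith))
  · filter_upwards [hcirc] with w hw
    by_cases hwζ : w = ζ₀
    · subst hwζ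
      apply Tendsto.congr' (f₁ := fun r : ℝ => ((1 + r : ℝ) : ℂ))
      · filter_upwards [hIoo] with r hr
        obtain ⟨hr0, hr1⟩ := hr
        have h1 : w - (r:ℂ) * w = ((1 - r : ℝ) : ℂ) * w := by push_cast; ring
        have h2 : w + (r:ℂ) * w = ((1 + r : ℝ) : ℂ) * w := by push_cast; ring
        have hne : ((1 - r : ℝ) : ℂ) ≠ 0 :=
          Complex.ofReal_ne_zero.2 (ne_of_gt (by linarith))
        rw [h1, h2, mul_div_mul_right _ _ hζne, mul_comm, div_mul_cancel₀ _ hne]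
      · have : Set.indicator {w} (fun _ => (2:ℂ)) w = 2 := by simp
        rw [this]
        have : Tendsto (fun r : ℝ => ((1 + r : ℝ) : ℂ)) (𝓝 (1:ℝ)) (𝓝 2) := by
          have : Continuous (fun r : ℝ => ((1 + r : ℝ) : ℂ)) := by fun_prop
          have h := this.tendsto 1
          norm_num at h
          convert h using 2
          norm_num
        exact this.mono_left nhdsWithin_le_nhds
    · have hind : Set.indicator {ζ₀} (fun _ => (2:ℂ)) w = 0 := by simp [hwζ]
      rw [hind]
      have hden : w - ζ₀ ≠ 0 := sub_ne_zero.2 hwζ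
      have hl : Tendsto (fun r : ℝ => ((1 - r : ℝ) : ℂ) * ((w + r * ζ₀) / (w - r * ζ₀)))
          (𝓝 (1:ℝ)) (𝓝 (0 * ((w + ζ₀)/(w - ζ₀)))) := by
        apply Tendsto.mul
        · have : Continuous (fun r : ℝ => ((1 - r : ℝ) : ℂ)) := by fun_prop
          have h := this.tendsto 1
          convert h using 2
          norm_num
        · apply Tendsto.div
          · have : Continuous (fun r : ℝ => w + (r:ℂ) * ζ₀) := by fun_prop
            have h := this.tendsto 1
            convert h using 2 <;> norm_num
          · have : Continuous (fun r : ℝ => w - (r:ℂ) * ζ₀) := by fun_prop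
            have h := this.tendsto 1
            convert h using 2 <;> norm_num
          · exact hden
      rw [zero_mul] at hl
      exact hl.mono_left nhdsWithin_le_nhds

end Aux


section PointMass

lemma point_mass (f : ℂ → ℂ) (hf : IsHolSelfMap f) (τ : ℂ) (hτ : ‖τ‖ = 1)
    (ζ₀ : ℂ) (hζ₀ : ‖ζ₀‖ = 1) (hrad : RadialLimit f ζ₀ τ)
    (d₀ : ℂ) (hang : NTLimit (fun z => (f z - τ) / (z - ζ₀)) ζ₀ d₀)
    (μ : Measure ℂ) (hμ : IsClarkMeasure f τ μ) (hd : d₀ ≠ 0) :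
    (μ {ζ₀}).toReal = 1 / ‖d₀‖ := by
  haveI : IsFiniteMeasure μ := hμ.1
  have hcirc : ∀ᵐ w ∂μ, ‖w‖ = 1 := by
    rw [MeasureTheory.ae_iff]
    exact hμ.2.1
  have hζne : ζ₀ ≠ 0 := by intro h; rw [h] at hζ₀; simp at hζ₀
  have hτsub : ∀ z ∈ unitDisc, τ - f z ≠ 0 := by
    intro z hz h
    have h2 : ‖f z‖ < 1 := hf.2 hz
    rw [← sub_eq_zero.1 h, hτ] at h2
    exact lt_irrefl 1 h2
  set F : ℂ → ℂ := fun z => (τ + f z) / (τ - f z) with hF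
  set H : ℂ → ℂ := fun z => ∫ w, (w + z) / (w - z) ∂μ with hH
  have hHdiff : DifferentiableOn ℂ H unitDisc := fun z hz =>
    ((H_hasDerivAt hcirc hz).differentiableAt).differentiableWithinAt
  have hFdiff : DifferentiableOn ℂ F unitDisc := by
    apply DifferentiableOn.div
    · exact (differentiableOn_const τ).add hf.1
    · exact (differentiableOn_const τ).sub hf.1
    · exact hτsub
  have hre : ∀ z ∈ unitDisc, ((fun z => F z - H z) z).re = 0 := by
    intro z hz
    have h1 : (F z).re = ∫ w, discPoissonKernel w z ∂μ := hμ.2.2 z hz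
    have h2 : (H z).re = ∫ w, discPoissonKernel w z ∂μ := by
      have h := integral_re (herglotz_integrable hcirc hz)
      simp only [RCLike.re_to_complex] at h
      rw [hH, ← h]
      apply integral_congr_ae
      filter_upwards [hcirc] with w hw
      exact herglotz_re hw
    simp [Complex.sub_re, h1, h2]
  have hconst : ∀ z ∈ unitDisc, F z - H z = F 0 - H 0 := fun z hz =>
    eq_const_of_re_zero ((hFdiff.sub hHdiff)) hre hz
  set κ := F 0 - H 0 with hκ
  have hIoo : Ioo (0:ℝ) 1 ∈ 𝓝[<] (1:ℝ) := Ioo_mem_nhdsLT (by norm_num)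
  have hmem : ∀ r : ℝ, r ∈ Ioo (0:ℝ) 1 → (r : ℂ) * ζ₀ ∈ unitDisc := by
    intro r hr
    simp only [unitDisc, Set.mem_setOf_eq, norm_mul, hζ₀, mul_one, Complex.norm_real, Real.norm_eq_abs]
    rw [abs_of_pos hr.1]; exact hr.2
  -- limit 1 : (1-r) F(rζ₀) → 2 μ{ζ₀}
  have hlim1 : Tendsto (fun r : ℝ => ((1 - r : ℝ) : ℂ) * F ((r:ℂ) * ζ₀)) (𝓝[<] (1:ℝ))
      (𝓝 (((2 * (μ {ζ₀}).toReal : ℝ) : ℂ))) := by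
    have heq : (fun r : ℝ => ((1 - r : ℝ) : ℂ) * H ((r:ℂ) * ζ₀) + ((1 - r : ℝ) : ℂ) * κ)
        =ᶠ[𝓝[<] (1:ℝ)] (fun r : ℝ => ((1 - r : ℝ) : ℂ) * F ((r:ℂ) * ζ₀)) := by
      filter_upwards [hIoo] with r hr
      have := hconst _ (hmem r hr)
      have hFr : F ((r:ℂ) * ζ₀) = H ((r:ℂ) * ζ₀) + κ := by
        rw [hκ]; linear_combination this
      rw [hFr]; ring
    apply Tendsto.congr' heq
    have hHlim : Tendsto (fun r : ℝ => ((1 - r : ℝ) : ℂ) * H ((r:ℂ) * ζ₀)) (𝓝[<] (1:ℝ))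
        (𝓝 (((2 * (μ {ζ₀}).toReal : ℝ) : ℂ))) := by
      have := dct_lemma hcirc hζ₀
      apply this.congr
      intro r
      rw [hH, ← MeasureTheory.integral_const_mul]
    have hκlim : Tendsto (fun r : ℝ => ((1 - r : ℝ) : ℂ) * κ) (𝓝[<] (1:ℝ)) (𝓝 0) := by
      have hc : Continuous (fun r : ℝ => ((1 - r : ℝ) : ℂ) * κ) := by fun_prop
      have h := hc.tendsto 1
      have h0 : ((1 - (1:ℝ) : ℝ) : ℂ) * κ = 0 := by norm_num
      rw [h0] at h
      exact h.mono_left nhdsWithin_le_nhds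
    have := hHlim.add hκlim
    simpa using this
  -- limit 2 : (1-r) F(rζ₀) → 2τ/(d₀ ζ₀)
  have hlim2 : Tendsto (fun r : ℝ => ((1 - r : ℝ) : ℂ) * F ((r:ℂ) * ζ₀)) (𝓝[<] (1:ℝ))
      (𝓝 (2 * τ / (d₀ * ζ₀))) := by
    set A : ℝ → ℂ := fun r => (f ((r:ℂ) * ζ₀) - τ) / ((r:ℂ) * ζ₀ - ζ₀) with hA
    have hmap : Tendsto (fun r : ℝ => (r:ℂ) * ζ₀) (𝓝[<] (1:ℝ)) (𝓝[stolzAngle ζ₀ 1] ζ₀) := by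
      apply tendsto_nhdsWithin_of_tendsto_nhds_of_eventually_within
      · have hc : Continuous (fun r : ℝ => (r:ℂ) * ζ₀) := by fun_prop
        have h := hc.tendsto 1
        norm_num at h
        exact h.mono_left nhdsWithin_le_nhds
      · filter_upwards [hIoo] with r hr
        have h1 := hmem r hr
        refine ⟨h1, ?_⟩
        have : ζ₀ - (r:ℂ) * ζ₀ = ((1 - r : ℝ) : ℂ) * ζ₀ := by push_cast; ring
        rw [this, norm_mul, hζ₀, mul_one, Complex.norm_real, Real.norm_eq_abs, abs_of_pos (by linarith [hr.2])]
        simp only [norm_mul, hζ₀, mul_one, Complex.norm_real, Real.norm_eq_abs, abs_of_pos hr.1]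
        norm_num
    have hAlim : Tendsto A (𝓝[<] (1:ℝ)) (𝓝 d₀) := (hang 1 le_rfl).comp hmap
    have hflim : Tendsto (fun r : ℝ => f ((r:ℂ) * ζ₀)) (𝓝[<] (1:ℝ)) (𝓝 τ) := hrad
    have heq : (fun r : ℝ => (τ + f ((r:ℂ) * ζ₀)) / (A r * ζ₀))
        =ᶠ[𝓝[<] (1:ℝ)] (fun r : ℝ => ((1 - r : ℝ) : ℂ) * F ((r:ℂ) * ζ₀)) := by
      filter_upwards [hIoo] with r hr
      have hz := hmem r hr
      have hne1 : τ - f ((r:ℂ) * ζ₀) ≠ 0 := hτsub _ hz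
      have hrne : ((1 - r : ℝ) : ℂ) ≠ 0 := Complex.ofReal_ne_zero.2 (ne_of_gt (by linarith [hr.2]))
      have hden : (r:ℂ) * ζ₀ - ζ₀ ≠ 0 := by
        have : (r:ℂ) * ζ₀ - ζ₀ = -(((1 - r : ℝ) : ℂ) * ζ₀) := by push_cast; ring
        rw [this]
        exact neg_ne_zero.2 (mul_ne_zero hrne hζne)
      have hAval : A r * ζ₀ = (τ - f ((r:ℂ) * ζ₀)) / ((1 - r : ℝ) : ℂ) := by
        simp only [hA]
        rw [div_mul_eq_mul_div, div_eq_div_iff hden hrne]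
        push_cast
        ring
      rw [hAval]
      simp only [hF]
      rw [div_div_eq_mul_div, mul_comm (τ + f ((r:ℂ) * ζ₀)), mul_div_assoc]
    apply Tendsto.congr' heq
    have hnum : Tendsto (fun r : ℝ => τ + f ((r:ℂ) * ζ₀)) (𝓝[<] (1:ℝ)) (𝓝 (2 * τ)) := by
      have := (tendsto_const_nhds (x := τ) (f := 𝓝[<] (1:ℝ))).add hflim
      convert this using 2
      ring
    have hdenl : Tendsto (fun r : ℝ => A r * ζ₀) (𝓝[<] (1:ℝ)) (𝓝 (d₀ * ζ₀)) :=
      hAlim.mul tendsto_const_nhds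
    exact hnum.div hdenl (mul_ne_zero hd hζne)
  -- combine
  have huniq : ((2 * (μ {ζ₀}).toReal : ℝ) : ℂ) = 2 * τ / (d₀ * ζ₀) :=
    tendsto_nhds_unique hlim1 hlim2
  have habs := congrArg norm huniq
  rw [norm_div, norm_mul, norm_mul, hτ, hζ₀, Complex.norm_two, Complex.norm_real, Real.norm_eq_abs] at habs
  have htR : 0 ≤ (μ {ζ₀}).toReal := ENNReal.toReal_nonneg
  rw [_root_.abs_of_nonneg (mul_nonneg (by norm_num : (0:ℝ) ≤ 2) htR), mul_one, mul_one] at habs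
  have habsd : ‖d₀‖ ≠ 0 := by simpa using hd
  rw [eq_div_iff habsd] at habs
  rw [eq_div_iff habsd]
  linarith

end PointMass

/-- the sum of the point masses `(1/|f'(ζ_j)|) δ_{ζ_j}` at boundary regular
contact points is dominated by the singular part of the Aleksandrov–Clark measure. -/
theorem statement10
    (f : ℂ → ℂ) (hf : IsHolSelfMap f)
    (τ : ℂ) (hτ : ‖τ‖ = 1)
    (n : ℕ) (ζ : Fin n → ℂ) (hdist : Function.Injective ζ)
    (hcirc : ∀ j, ‖ζ j‖ = 1)
    (hrad : ∀ j, RadialLimit f (ζ j) τ)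
    (d : Fin n → ℂ)
    (hang : ∀ j, NTLimit (fun z => (f z - τ) / (z - ζ j)) (ζ j) (d j))
    (μ : MeasureTheory.Measure ℂ) (hμ : IsClarkMeasure f τ μ) :
    (∑ j : Fin n, (ENNReal.ofReal (1 / ‖d j‖)) • MeasureTheory.Measure.dirac (ζ j)) ≤
      μ.singularPart circleLebesgue := by
  haveI : IsFiniteMeasure μ := hμ.1
  set ν := μ.singularPart circleLebesgue with hν
  have hsp : ∀ j, μ {ζ j} = ν {ζ j} := by
    intro j
    have hdec := μ.singularPart_add_rnDeriv circleLebesgue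
    have h0 : (circleLebesgue.withDensity (μ.rnDeriv circleLebesgue)) {ζ j} = 0 := by
      rw [MeasureTheory.withDensity_apply _ (measurableSet_singleton _)]
      exact MeasureTheory.setLIntegral_measure_zero _ _ (circleLebesgue_singleton _)
    conv_lhs => rw [← hdec]
    rw [Measure.add_apply, h0, add_zero]
  have hmass : ∀ j, ENNReal.ofReal (1 / ‖d j‖) ≤ ν {ζ j} := by
    intro j
    by_cases hd : d j = 0
    · simp [hd]
    · have hpm := point_mass f hf τ hτ (ζ j) (hcirc j) (hrad j) (d j) (hang j) μ hμ hd
      rw [← hsp j, ← hpm, ENNReal.ofReal_toReal (measure_ne_top μ _)]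
  rw [Measure.le_iff]
  intro s hs
  rw [Measure.finset_sum_apply]
  have step1 : ∑ j : Fin n, ((ENNReal.ofReal (1 / ‖d j‖)) • Measure.dirac (ζ j)) s
      ≤ ∑ j : Fin n, ν (s ∩ {ζ j}) := by
    apply Finset.sum_le_sum
    intro j _
    rw [Measure.smul_apply, Measure.dirac_apply' _ hs, smul_eq_mul]
    by_cases hj : ζ j ∈ s
    · have h1 : s.indicator (1 : ℂ → ℝ≥0∞) (ζ j) = 1 := by simp [hj]
      rw [h1, mul_one]
      have h2 : s ∩ {ζ j} = {ζ j} := Set.inter_eq_right.2 (Set.singleton_subset_iff.2 hj)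
      rw [h2]
      exact hmass j
    · have h1 : s.indicator (1 : ℂ → ℝ≥0∞) (ζ j) = 0 := by simp [hj]
      rw [h1, mul_zero]
      exact zero_le
  refine step1.trans ?_
  have hdisj : Pairwise (Function.onFun Disjoint (fun j : Fin n => s ∩ {ζ j})) := by
    intro i j hij
    refine Disjoint.mono Set.inter_subset_right Set.inter_subset_right ?_
    rw [Set.disjoint_singleton]
    exact fun h => hij (hdist h)
  have hmeas : ∀ j : Fin n, MeasurableSet (s ∩ {ζ j}) :=
    fun j => hs.inter (measurableSet_singleton _)
  have := MeasureTheory.measure_iUnion (μ := ν) hdisj hmeas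
  rw [tsum_fintype] at this
  rw [← this]
  apply measure_mono
  exact Set.iUnion_subset fun j => Set.inter_subset_left
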